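/- Let G be a connected k-uniform hypergraph on n vertices with average 2-degrees m₁ ≥ m₂ ≥ … ≥ m_n. If ρ(G) = m₁^{1/k} m₂^{1−1/k}, then all vertices of G have the same average 2-degree, i.e., m₁ = m₂ = … = m_n; conversely, if all average 2-degrees are equal, then ρ(G) = m₁ = m₁^{1/k} m₂^{1−1/k}. -/

import Mathlib

/-- The spectral radius of an order-`k` tensor of dimension `n`: the largest modulus of its
(complex) eigenvalues, where `ρ` is an eigenvalue if `T x = ρ x^{[k-1]}` for some `x ≠ 0`. -/
noncomputable def specRad (n k : ℕ) (T : Fin n → (Fin (k-1) → Fin n) → ℝ) : ℝ :=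
  sSup {r : ℝ | ∃ ρ : ℂ, ‖ρ‖ = r ∧ ∃ x : Fin n → ℂ, x ≠ 0 ∧
    ∀ i, (∑ f : Fin (k-1) → Fin n, (T i f : ℂ) * ∏ a, x (f a)) = ρ * x i ^ (k-1)}

/-- A hypergraph on vertex set `Fin n` is a finite set of edges; `hDeg` is the degree of
vertex `i`, the number of edges containing `i`. -/
def hDeg (n : ℕ) (E : Finset (Finset (Fin n))) (i : Fin n) : ℕ :=
  (E.filter (fun e => i ∈ e)).card

/-- The average 2-degree of vertex `i` in a `k`-uniform hypergraph:
`m_i = (Σ_{{i,i₂,…,i_k} ∈ E_i} d_{i₂} ⋯ d_{i_k}) / d_i^{k-1}`. -/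
noncomputable def avg2 (n k : ℕ) (E : Finset (Finset (Fin n))) (i : Fin n) : ℝ :=
  (∑ e ∈ E.filter (fun e => i ∈ e), ∏ j ∈ e.erase i, (hDeg n E j : ℝ)) /
    (hDeg n E i : ℝ) ^ (k-1)

/-- The adjacency tensor of a `k`-uniform hypergraph: entry `1/(k-1)!` at `(i₁,…,i_k)` when
`{i₁,…,i_k}` is an edge, and `0` otherwise. -/
noncomputable def adjT (n k : ℕ) (E : Finset (Finset (Fin n))) :
    Fin n → (Fin (k-1) → Fin n) → ℝ :=
  fun i f => if insert i (Finset.image f Finset.univ) ∈ E then 1 / (k-1).factorial else 0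

/-- The signless Laplacian tensor `Q(G) = D(G) + A(G)`. -/
noncomputable def qT (n k : ℕ) (E : Finset (Finset (Fin n))) :
    Fin n → (Fin (k-1) → Fin n) → ℝ :=
  fun i f => (if ∀ a, f a = i then (hDeg n E i : ℝ) else 0) + adjT n k E i f

/-- A hypergraph is connected if every pair of distinct vertices is joined by a sequence of
pairwise intersecting edges. -/
def HConn (n : ℕ) (E : Finset (Finset (Fin n))) : Prop :=
  ∀ u v : Fin n, u ≠ v → ∃ r : ℕ, ∃ es : Fin (r+1) → Finset (Fin n),
    (∀ s, es s ∈ E) ∧ u ∈ es 0 ∧ v ∈ es (Fin.last r) ∧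
    ∀ s : Fin r, (es s.castSucc ∩ es s.succ).Nonempty

/-!
The eigen-equation of `A(G)` reads `∑_{e ∋ i} ∏_{j ∈ e \ i} x_j = ρ x_i^{k-1}`. Given positive
weights `w` whose weighted row sums satisfy `∑_{e ∋ i} ∏_{j ∈ e \ i} w_j ≤ B w_i^{k-1}`, looking
at a vertex where `|x_i| / w_i` is maximal gives `|ρ| ≤ B`; on a connected hypergraph `|ρ| = B` forces
every weighted row sum to equal `B`, since the maximizing vertices spread along edges.

With `w` the degree vector the row sums are `m_i d_i^{k-1}`, so `ρ ≤ m₁`, with equality when all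
`m_i` agree (then `d` itself is an eigenvector). Multiplying the weight of the vertex `z` with
`m_z = m₁` by `c = (m₁ / m₂)^{1/k}` gives the bound `B = m₁^{1/k} m₂^{1-1/k}`. If `ρ(G) = B`, then
`B` is an eigenvalue (the eigenvalues form a compact set), and tightness gives `m_i = m₂` for
`i ≠ z`; if moreover `m₁ > m₂` it puts `z` in every edge, and double counting
`∑_{j ≠ z} d_j = (k-1) d_z` and `∑_{j ≠ z} d_j m_j d_j^{k-1} = (k-1) m₁ d_z^k` yields `m₁ ≤ m₂`.
-/

open Finset Function
open scoped Nat

section EdgeSum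

variable {α R : Type*} [DecidableEq α]

def edgeSum [CommSemiring R] (E : Finset (Finset α)) (w : α → R) (i : α) : R :=
  ∑ e ∈ E with i ∈ e, ∏ j ∈ e.erase i, w j

variable {E : Finset (Finset α)} {k : ℕ}

lemma mul_edgeSum [CommSemiring R] (w : α → R) (i : α) :
    w i * edgeSum E w i = ∑ e ∈ E with i ∈ e, ∏ j ∈ e, w j := by
  rw [edgeSum, mul_sum]
  exact sum_congr rfl fun e he => mul_prod_erase e w (mem_filter.1 he).2

lemma sum_mul_edgeSum [Fintype α] [CommSemiring R] (hcard : ∀ e ∈ E, e.card = k) (w : α → R) :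
    ∑ i, w i * edgeSum E w i = k * ∑ e ∈ E, ∏ j ∈ e, w j := by
  simp_rw [mul_edgeSum, sum_filter]
  rw [sum_comm, mul_sum]
  refine sum_congr rfl fun e he => ?_
  rw [sum_ite_mem, univ_inter, sum_const, hcard e he, nsmul_eq_mul]

lemma sum_erase_mul_edgeSum [Fintype α] [CommRing R] (hcard : ∀ e ∈ E, e.card = k) {z : α}
    (hz : ∀ e ∈ E, z ∈ e) (w : α → R) :
    ∑ j ∈ univ.erase z, w j * edgeSum E w j = (k - 1) * (w z * edgeSum E w z) := by
  have h := sum_mul_edgeSum hcard w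
  rw [← add_sum_erase _ _ (mem_univ z), mul_edgeSum, filter_true_of_mem hz] at h
  rw [mul_edgeSum, filter_true_of_mem hz]
  linear_combination h

lemma edgeSum_const_mul [CommSemiring R] (hcard : ∀ e ∈ E, e.card = k) (t : R) (w : α → R)
    (i : α) : edgeSum E (fun j => t * w j) i = t ^ (k - 1) * edgeSum E w i := by
  rw [edgeSum, edgeSum, mul_sum]
  refine sum_congr rfl fun e he => ?_
  obtain ⟨heE, hie⟩ := mem_filter.1 he
  rw [prod_mul_distrib, prod_const, card_erase_of_mem hie, hcard e heE]

lemma norm_edgeSum_le [NormedCommRing R] [NormOneClass R] (x : α → R) (i : α) :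
    ‖edgeSum E x i‖ ≤ edgeSum E (fun j => ‖x j‖) i :=
  (norm_sum_le _ _).trans <| sum_le_sum fun _ _ => norm_prod_le _ _

lemma edgeSum_update_self [CommSemiring R] (w : α → R) (z : α) (y : R) :
    edgeSum E (update w z y) z = edgeSum E w z :=
  sum_congr rfl fun _ _ => prod_congr rfl fun _ hj => update_of_ne (ne_of_mem_erase hj) _ _

lemma edgeSum_le_edgeSum {u v : α → ℝ} (hu : ∀ j, 0 ≤ u j) (huv : ∀ j, u j ≤ v j) (i : α) :
    edgeSum E u i ≤ edgeSum E v i :=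
  sum_le_sum fun _ _ => prod_le_prod (fun j _ => hu j) fun j _ => huv j

lemma edgeSum_pos {w : α → ℝ} (hw : ∀ j, 0 < w j) {e : Finset α} (he : e ∈ E)
    {i : α} (hie : i ∈ e) : 0 < edgeSum E w i :=
  sum_pos' (fun _ _ => prod_nonneg fun j _ => (hw j).le)
    ⟨e, mem_filter.2 ⟨he, hie⟩, prod_pos fun j _ => hw j⟩

lemma prod_lt_prod_of_lt {s : Finset α} {u v : α → ℝ} (hu : ∀ l ∈ s, 0 ≤ u l)
    (huv : ∀ l ∈ s, u l ≤ v l) (hv : ∀ l ∈ s, 0 < v l) {j : α} (hj : j ∈ s) (hlt : u j < v j) :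
    ∏ l ∈ s, u l < ∏ l ∈ s, v l := by
  rw [← mul_prod_erase s u hj, ← mul_prod_erase s v hj]
  have hrest : ∏ l ∈ s.erase j, u l ≤ ∏ l ∈ s.erase j, v l :=
    prod_le_prod (fun l hl => hu l (mem_of_mem_erase hl)) fun l hl => huv l (mem_of_mem_erase hl)
  calc u j * ∏ l ∈ s.erase j, u l ≤ u j * ∏ l ∈ s.erase j, v l :=
        mul_le_mul_of_nonneg_left hrest (hu j hj)
    _ < v j * ∏ l ∈ s.erase j, v l :=
        mul_lt_mul_of_pos_right hlt (prod_pos fun l hl => hv l (mem_of_mem_erase hl))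

lemma eq_of_edgeSum_eq {u v : α → ℝ} (hu : ∀ j, 0 ≤ u j) (huv : ∀ j, u j ≤ v j)
    (hv : ∀ j, 0 < v j) {i : α} (h : edgeSum E u i = edgeSum E v i) {e : Finset α} (he : e ∈ E)
    (hie : i ∈ e) {j : α} (hje : j ∈ e) (hji : j ≠ i) : u j = v j := by
  have hprod := (sum_eq_sum_iff_of_le fun _ _ => prod_le_prod (fun j _ => hu j)
    fun j _ => huv j).1 h e (mem_filter.2 ⟨he, hie⟩)
  by_contra hne
  exact (prod_lt_prod_of_lt (fun l _ => hu l) (fun l _ => huv l) (fun l _ => hv l)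
    (mem_erase.2 ⟨hji, hje⟩) ((huv j).lt_of_ne hne)).ne hprod

end EdgeSum

section Eigenpair

variable {n k : ℕ} (T : Fin n → (Fin (k-1) → Fin n) → ℝ)

def IsEigenpair (ρ : ℂ) (x : Fin n → ℂ) : Prop :=
  x ≠ 0 ∧ ∀ i, ∑ f : Fin (k-1) → Fin n, (T i f : ℂ) * ∏ a, x (f a) = ρ * x i ^ (k-1)

variable {T}

lemma IsEigenpair.smul {ρ : ℂ} {x : Fin n → ℂ} (h : IsEigenpair T ρ x) {c : ℂ} (hc : c ≠ 0) :
    IsEigenpair T ρ (c • x) := by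
  refine ⟨smul_ne_zero hc h.1, fun i => ?_⟩
  simp only [Pi.smul_apply, smul_eq_mul, prod_mul_distrib, prod_const, card_univ,
    Fintype.card_fin, mul_pow]
  rw [mul_left_comm ρ, ← h.2 i, mul_sum]
  exact sum_congr rfl fun f _ => by ring

lemma specRad_eq_sSup :
    specRad n k T = sSup {r | ∃ ρ : ℂ, ‖ρ‖ = r ∧ ∃ x, IsEigenpair T ρ x} := rfl

lemma specRad_eq_of_isEigenpair {ρ : ℂ} {x : Fin n → ℂ} (hρ : IsEigenpair T ρ x)
    (hmax : ∀ ρ' x', IsEigenpair T ρ' x' → ‖ρ'‖ ≤ ‖ρ‖) : specRad n k T = ‖ρ‖ :=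
  specRad_eq_sSup ▸ IsGreatest.csSup_eq
    ⟨⟨ρ, rfl, x, hρ⟩, by rintro _ ⟨ρ', rfl, x', hρ'⟩; exact hmax ρ' x' hρ'⟩

/-- The eigenvalue norms are those of eigenpairs with `‖x‖ = 1`, a compact set once they are
bounded. -/
lemma exists_isEigenpair_norm_eq_specRad {B : ℝ}
    (hB : ∀ ρ x, IsEigenpair T ρ x → ‖ρ‖ ≤ B) (h0 : specRad n k T ≠ 0) :
    ∃ ρ x, IsEigenpair T ρ x ∧ ‖ρ‖ = specRad n k T := by
  set K : Set (ℂ × (Fin n → ℂ)) := {p | ‖p.2‖ = 1 ∧ IsEigenpair T p.1 p.2}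
  have hK : IsCompact K := by
    refine Metric.isCompact_of_isClosed_isBounded ?_ ?_
    · have hKeq : K = {p | ‖p.2‖ = 1} ∩ ⋂ i, {p | ∑ f : Fin (k-1) → Fin n,
          (T i f : ℂ) * ∏ a, p.2 (f a) = p.1 * p.2 i ^ (k-1)} := by
        ext p
        simp only [K, IsEigenpair, Set.mem_inter_iff, Set.mem_iInter]
        exact ⟨fun h => ⟨h.1, h.2.2⟩, fun h => ⟨h.1, fun h0 => by simp [h0] at h, h.2⟩⟩
      rw [hKeq]
      exact (isClosed_eq (by fun_prop) continuous_const).inter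
        (isClosed_iInter fun i => isClosed_eq (by fun_prop) (by fun_prop))
    · refine isBounded_iff_forall_norm_le.2 ⟨max B 1, fun p hp => ?_⟩
      rw [Prod.norm_def]
      exact max_le_max (hB _ _ hp.2) hp.1.le
  have hS : {r : ℝ | ∃ ρ : ℂ, ‖ρ‖ = r ∧ ∃ x, IsEigenpair T ρ x} = (fun p => ‖p.1‖) '' K := by
    ext r
    constructor
    · rintro ⟨ρ, rfl, x, hx⟩
      have hnx : ‖x‖ ≠ 0 := norm_ne_zero_iff.2 hx.1
      refine ⟨(ρ, ((‖x‖⁻¹ : ℝ) : ℂ) • x), ⟨?_, hx.smul (by simpa using hnx)⟩, rfl⟩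
      simp [norm_smul, hnx]
    · rintro ⟨p, hp, rfl⟩
      exact ⟨p.1, rfl, p.2, hp.2⟩
  have hne : {r : ℝ | ∃ ρ : ℂ, ‖ρ‖ = r ∧ ∃ x, IsEigenpair T ρ x}.Nonempty := by
    by_contra hempty
    exact h0 (by rw [specRad_eq_sSup, Set.not_nonempty_iff_eq_empty.1 hempty, Real.sSup_empty])
  obtain ⟨ρ, hρ, x, hx⟩ := (hS ▸ hK.image (by fun_prop)).sSup_mem hne
  exact ⟨ρ, x, hx, hρ.trans specRad_eq_sSup.symm⟩

end Eigenpair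

section FunctionsOntoFinset

variable {α : Type*} [DecidableEq α] {m : ℕ}

lemma insert_image_eq_iff {f : Fin m → α} {i : α} {e : Finset α} (hie : i ∈ e)
    (he : e.card = m + 1) : insert i (image f univ) = e ↔ image f univ = e.erase i := by
  refine ⟨fun h => ?_, fun h => by rw [h, insert_erase hie]⟩
  have hi : i ∉ image f univ := fun hi => by
    have := card_image_le (s := univ) (f := f)
    rw [← insert_eq_of_mem hi, h, he, card_univ, Fintype.card_fin] at this
    omega
  rw [← h, erase_insert hi]

lemma injective_of_image_eq {f : Fin m → α} {s : Finset α} (hs : s.card = m)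
    (hf : image f univ = s) : Injective f := by
  have h : Set.InjOn f (univ : Finset (Fin m)) :=
    card_image_iff.1 (by rw [hf, hs, card_univ, Fintype.card_fin])
  rwa [coe_univ, Set.injOn_univ] at h

variable [Fintype α]

lemma card_filter_image_eq {s : Finset α} (hs : s.card = m) :
    #{f : Fin m → α | image f univ = s} = m ! := by
  have hcard : Fintype.card (Fin m ↪ s) = m ! := by
    rw [Fintype.card_embedding_eq, Fintype.card_coe, hs, Fintype.card_fin, Nat.descFactorial_self]
  rw [← hcard, ← card_univ]
  refine card_bij' (fun f hf => ⟨fun a => ⟨f a, (mem_filter.1 hf).2 ▸ mem_image_of_mem f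
      (mem_univ a)⟩, fun a b hab => ?_⟩) (fun g _ => fun a => (g a : α))
    (fun _ _ => mem_univ _) (fun g _ => mem_filter.2 ⟨mem_univ _, ?_⟩)
    (fun _ _ => rfl) (fun _ _ => rfl)
  · exact injective_of_image_eq hs (mem_filter.1 hf).2 (congrArg Subtype.val hab)
  · refine (eq_of_subset_of_card_le (fun y hy => ?_) ?_)
    · obtain ⟨a, -, rfl⟩ := mem_image.1 hy
      exact (g a).2
    · rw [hs, card_image_of_injective (f := fun a => (g a : α)) _
        (Subtype.val_injective.comp g.injective), card_univ, Fintype.card_fin]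

lemma sum_prod_filter_image_eq {R : Type*} [CommSemiring R] {s : Finset α} (hs : s.card = m)
    (x : α → R) :
    ∑ f : Fin m → α with image f univ = s, ∏ a, x (f a) = m ! * ∏ j ∈ s, x j := by
  rw [← card_filter_image_eq hs, ← nsmul_eq_mul, ← sum_const]
  refine sum_congr rfl fun f hf => ?_
  rw [← (mem_filter.1 hf).2,
    prod_image fun a _ b _ hab => injective_of_image_eq hs (mem_filter.1 hf).2 hab]

end FunctionsOntoFinset

lemma sum_adjT_mul_prod {n k : ℕ} {E : Finset (Finset (Fin n))} (hk : 0 < k)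
    (hcard : ∀ e ∈ E, e.card = k) (i : Fin n) (x : Fin n → ℂ) :
    ∑ f : Fin (k-1) → Fin n, (adjT n k E i f : ℂ) * ∏ a, x (f a) = edgeSum E x i := by
  have hfib : ∀ e ∈ E.filter (i ∈ ·), ∀ f : Fin (k-1) → Fin n,
      insert i (image f univ) ∈ E ∧ insert i (image f univ) = e ↔ image f univ = e.erase i := by
    intro e he f
    obtain ⟨heE, hie⟩ := mem_filter.1 he
    rw [← insert_image_eq_iff hie (by rw [hcard e heE]; omega)]
    exact ⟨And.right, fun h => ⟨h ▸ heE, h⟩⟩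
  calc ∑ f : Fin (k-1) → Fin n, (adjT n k E i f : ℂ) * ∏ a, x (f a)
      = ∑ f : Fin (k-1) → Fin n with insert i (image f univ) ∈ E,
          (1 / (k-1)! : ℂ) * ∏ a, x (f a) := by
        simp only [adjT, sum_filter]
        exact sum_congr rfl fun f _ => by split_ifs <;> simp
    _ = ∑ e ∈ E.filter (i ∈ ·), ∑ f : Fin (k-1) → Fin n with image f univ = e.erase i,
          (1 / (k-1)! : ℂ) * ∏ a, x (f a) := by
        rw [← sum_fiberwise_of_maps_to (g := fun f => insert i (image f univ))
          (t := E.filter (i ∈ ·))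
          fun f hf => mem_filter.2 ⟨(mem_filter.1 hf).2, mem_insert_self _ _⟩]
        refine sum_congr rfl fun e he => ?_
        rw [filter_filter]
        exact sum_congr (filter_congr fun f _ => hfib e he f) fun _ _ => rfl
    _ = edgeSum E x i := by
        refine sum_congr rfl fun e he => ?_
        obtain ⟨heE, hie⟩ := mem_filter.1 he
        rw [← mul_sum, sum_prod_filter_image_eq (by rw [card_erase_of_mem hie, hcard e heE])]
        have hfact : ((k - 1)! : ℂ) ≠ 0 := Nat.cast_ne_zero.2 (Nat.factorial_ne_zero _)
        rw [← mul_assoc, one_div_mul_cancel hfact, one_mul]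

lemma isEigenpair_adjT_iff {n k : ℕ} {E : Finset (Finset (Fin n))} (hk : 0 < k)
    (hcard : ∀ e ∈ E, e.card = k) {ρ : ℂ} {x : Fin n → ℂ} :
    IsEigenpair (adjT n k E) ρ x ↔ x ≠ 0 ∧ ∀ i, edgeSum E x i = ρ * x i ^ (k-1) := by
  simp only [IsEigenpair, sum_adjT_mul_prod hk hcard]

section Connected

variable {n : ℕ} {E : Finset (Finset (Fin n))}

lemma HConn.forall_of_forall_mem_edge (hconn : HConn n E) {P : Fin n → Prop} {i₀ : Fin n}
    (h₀ : P i₀) (hstep : ∀ e ∈ E, ∀ i ∈ e, P i → ∀ j ∈ e, P j) (v : Fin n) : P v := by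
  rcases eq_or_ne i₀ v with rfl | hv
  · exact h₀
  obtain ⟨r, es, hes, hi₀, hvr, hmeet⟩ := hconn i₀ v hv
  have hpath : ∀ s, ∀ j ∈ es s, P j := by
    refine Fin.induction (hstep _ (hes 0) i₀ hi₀ h₀) fun s ih => ?_
    obtain ⟨u, hu⟩ := hmeet s
    exact hstep _ (hes s.succ) u (mem_inter.1 hu).2 (ih u (mem_inter.1 hu).1)
  exact hpath (Fin.last r) v hvr

lemma HConn.exists_mem [Nontrivial (Fin n)] (hconn : HConn n E) (i : Fin n) :
    ∃ e ∈ E, i ∈ e := by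
  obtain ⟨j, hj⟩ := exists_ne i
  obtain ⟨r, es, hes, hi, -⟩ := hconn i j hj.symm
  exact ⟨es 0, hes 0, hi⟩

end Connected

section WeightedBound

variable {α : Type*} [Fintype α] {n k : ℕ} {E : Finset (Finset (Fin n))} {w : Fin n → ℝ}
  {B : ℝ} {ρ : ℂ} {x : Fin n → ℂ}

lemma exists_scale_dominating {F : Type*} [NormedAddCommGroup F] {x : α → F} {w : α → ℝ}
    (hx : x ≠ 0) (hw : ∀ j, 0 < w j) :
    ∃ t > 0, (∀ j, ‖x j‖ ≤ t * w j) ∧ ∃ i, ‖x i‖ = t * w i := by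
  obtain ⟨j, hj⟩ := Function.ne_iff.1 hx
  obtain ⟨i, -, hmax⟩ := exists_max_image univ (fun j => ‖x j‖ / w j) ⟨j, mem_univ j⟩
  refine ⟨‖x i‖ / w i, (div_pos (norm_pos_iff.2 hj) (hw j)).trans_le (hmax j (mem_univ j)),
    fun l => (div_le_iff₀ (hw l)).1 (hmax l (mem_univ l)), i, (div_mul_cancel₀ _ (hw i).ne').symm⟩

lemma norm_mul_pow_le_of_dominated (hcard : ∀ e ∈ E, e.card = k)
    (heig : ∀ i, edgeSum E x i = ρ * x i ^ (k-1)) (hw : ∀ j, 0 < w j) {t : ℝ} (ht : 0 < t)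
    (hdom : ∀ j, ‖x j‖ ≤ t * w j) {i : Fin n} (hi : ‖x i‖ = t * w i) :
    ‖ρ‖ * (t * w i) ^ (k-1) ≤ t ^ (k-1) * edgeSum E w i ∧
      (‖ρ‖ * (t * w i) ^ (k-1) = t ^ (k-1) * edgeSum E w i →
        ∀ e ∈ E, i ∈ e → ∀ j ∈ e, ‖x j‖ = t * w j) := by
  have hnorm : ‖ρ‖ * (t * w i) ^ (k-1) ≤ edgeSum E (fun j => ‖x j‖) i := by
    rw [← hi, ← norm_pow, ← norm_mul, ← heig]
    exact norm_edgeSum_le x i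
  have hle := edgeSum_le_edgeSum (E := E) (fun j => norm_nonneg (x j)) hdom i
  rw [edgeSum_const_mul hcard] at hle
  refine ⟨hnorm.trans hle, fun heq e he hie j hje => ?_⟩
  rcases eq_or_ne j i with rfl | hji
  · exact hi
  refine eq_of_edgeSum_eq (fun j => norm_nonneg (x j)) hdom (fun j => mul_pos ht (hw j))
    ?_ he hie hje hji
  rw [edgeSum_const_mul hcard]
  exact le_antisymm hle (heq ▸ hnorm)

lemma norm_le_of_edgeSum_le (hcard : ∀ e ∈ E, e.card = k) (hw : ∀ j, 0 < w j)
    (hB : ∀ i, edgeSum E w i ≤ B * w i ^ (k-1)) (hx : x ≠ 0)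
    (heig : ∀ i, edgeSum E x i = ρ * x i ^ (k-1)) : ‖ρ‖ ≤ B := by
  obtain ⟨t, ht, hdom, i, hi⟩ := exists_scale_dominating hx hw
  refine le_of_mul_le_mul_right ?_ (pow_pos (mul_pos ht (hw i)) (k-1))
  calc ‖ρ‖ * (t * w i) ^ (k-1) ≤ t ^ (k-1) * edgeSum E w i :=
        (norm_mul_pow_le_of_dominated hcard heig hw ht hdom hi).1
    _ ≤ t ^ (k-1) * (B * w i ^ (k-1)) := mul_le_mul_of_nonneg_left (hB i) (by positivity)
    _ = B * (t * w i) ^ (k-1) := by ring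

lemma edgeSum_eq_of_norm_eq (hconn : HConn n E) (hcard : ∀ e ∈ E, e.card = k)
    (hw : ∀ j, 0 < w j) (hB : ∀ i, edgeSum E w i ≤ B * w i ^ (k-1)) (hx : x ≠ 0)
    (heig : ∀ i, edgeSum E x i = ρ * x i ^ (k-1)) (hρ : ‖ρ‖ = B) (i : Fin n) :
    edgeSum E w i = B * w i ^ (k-1) := by
  obtain ⟨t, ht, hdom, i₀, hi₀⟩ := exists_scale_dominating hx hw
  have htight : ∀ j, ‖x j‖ = t * w j →
      ‖ρ‖ * (t * w j) ^ (k-1) = t ^ (k-1) * edgeSum E w j := fun j hj =>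
    le_antisymm (norm_mul_pow_le_of_dominated hcard heig hw ht hdom hj).1 <| by
      calc t ^ (k-1) * edgeSum E w j ≤ t ^ (k-1) * (B * w j ^ (k-1)) :=
            mul_le_mul_of_nonneg_left (hB j) (by positivity)
        _ = ‖ρ‖ * (t * w j) ^ (k-1) := by rw [hρ]; ring
  have hall : ∀ j, ‖x j‖ = t * w j := hconn.forall_of_forall_mem_edge hi₀ fun e he j hje hj =>
    (norm_mul_pow_le_of_dominated hcard heig hw ht hdom hj).2 (htight j hj) e he hje
  have h := htight i (hall i)
  rw [hρ, mul_pow, ← mul_assoc, mul_comm B, mul_assoc] at h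
  exact (mul_left_cancel₀ (pow_ne_zero _ ht.ne') h).symm

end WeightedBound

section Update

variable {α : Type*} [DecidableEq α] {E : Finset (Finset α)} {d : α → ℝ} {c : ℝ} {z i : α}

lemma prod_update_mul_self {s : Finset α} (hz : z ∈ s) :
    ∏ j ∈ s, update d z (c * d z) j = c * ∏ j ∈ s, d j := by
  rw [prod_update_of_mem hz, sdiff_singleton_eq_erase, mul_assoc, mul_prod_erase s d hz]

lemma prod_update_mul_le (hd : ∀ j, 0 ≤ d j) (hc : 1 ≤ c) (s : Finset α) :
    ∏ j ∈ s, update d z (c * d z) j ≤ c * ∏ j ∈ s, d j := by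
  by_cases hz : z ∈ s
  · exact (prod_update_mul_self hz).le
  · rw [prod_update_of_notMem hz]
    exact le_mul_of_one_le_left (prod_nonneg fun j _ => hd j) hc

lemma edgeSum_update_mul_le (hd : ∀ j, 0 ≤ d j) (hc : 1 ≤ c) (i : α) :
    edgeSum E (update d z (c * d z)) i ≤ c * edgeSum E d i := by
  rw [edgeSum, edgeSum, mul_sum]
  exact sum_le_sum fun e _ => prod_update_mul_le hd hc _

lemma mem_of_edgeSum_update_mul_eq (hd : ∀ j, 0 < d j) (hc : 1 < c)
    (h : edgeSum E (update d z (c * d z)) i = c * edgeSum E d i) {e : Finset α} (he : e ∈ E)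
    (hie : i ∈ e) : z ∈ e := by
  rw [edgeSum, edgeSum, mul_sum] at h
  have hterm := (sum_eq_sum_iff_of_le fun e _ => prod_update_mul_le (fun j => (hd j).le) hc.le
    (e.erase i)).1 h e (mem_filter.2 ⟨he, hie⟩)
  by_contra hz
  rw [prod_update_of_notMem fun h => hz (mem_of_mem_erase h)] at hterm
  exact (lt_mul_of_one_lt_left (prod_pos fun j _ => hd j) hc).ne hterm

end Update

section AverageDegree

variable {n k : ℕ} {E : Finset (Finset (Fin n))}

def degree (E : Finset (Finset (Fin n))) (j : Fin n) : ℝ := hDeg n E j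

lemma degree_nonneg (j : Fin n) : 0 ≤ degree E j := Nat.cast_nonneg _

lemma avg2_eq_div (i : Fin n) :
    avg2 n k E i = edgeSum E (degree E) i / degree E i ^ (k-1) := rfl

-- At an isolated vertex both sides vanish, as `avg2` is then `0 / 0 = 0`.
lemma edgeSum_degree (i : Fin n) :
    edgeSum E (degree E) i = avg2 n k E i * degree E i ^ (k-1) := by
  refine (div_mul_cancel_of_imp fun h => ?_).symm
  have hempty : E.filter (i ∈ ·) = ∅ := by
    simpa [degree, hDeg] using pow_eq_zero_iff'.1 h |>.1
  simp only [edgeSum, hempty, sum_empty]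

lemma edgeSum_one (i : Fin n) : edgeSum E (fun _ => (1 : ℝ)) i = degree E i := by
  simp [edgeSum, degree, hDeg]

variable [Nontrivial (Fin n)]

lemma degree_pos (hconn : HConn n E) (i : Fin n) : 0 < degree E i := by
  obtain ⟨e, he, hie⟩ := hconn.exists_mem i
  exact Nat.cast_pos.2 (card_pos.2 ⟨e, mem_filter.2 ⟨he, hie⟩⟩)

lemma avg2_pos (hconn : HConn n E) (i : Fin n) : 0 < avg2 n k E i := by
  obtain ⟨e, he, hie⟩ := hconn.exists_mem i
  exact div_pos (edgeSum_pos (degree_pos hconn) he hie) (pow_pos (degree_pos hconn i) _)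

end AverageDegree

section GeometricMean

variable {a b B : ℝ} {k : ℕ}

lemma rpow_one_div_mul_rpow_pow (ha : 0 ≤ a) (hb : 0 ≤ b) (hk : k ≠ 0) :
    (a ^ ((1 : ℝ)/k) * b ^ (1 - (1 : ℝ)/k)) ^ k = a * b ^ (k-1) := by
  have hk' : (k : ℝ) ≠ 0 := Nat.cast_ne_zero.2 hk
  have h1 : (1 : ℝ)/k * k = 1 := by field_simp
  have h2 : (1 - (1 : ℝ)/k) * k = ((k - 1 : ℕ) : ℝ) := by
    rw [Nat.cast_sub (Nat.one_le_iff_ne_zero.2 hk), Nat.cast_one]; field_simp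
  rw [mul_pow, ← Real.rpow_mul_natCast ha, ← Real.rpow_mul_natCast hb, h1, h2, Real.rpow_one,
    Real.rpow_natCast]

lemma rpow_one_div_mul_rpow_self (ha : 0 < a) : a ^ ((1 : ℝ)/k) * a ^ (1 - (1 : ℝ)/k) = a := by
  rw [← Real.rpow_add ha, add_sub_cancel, Real.rpow_one]

lemma le_iff_le_of_pow_eq (hb : 0 < b) (hB : 0 ≤ B) (hk : k ≠ 0) (h : B ^ k = a * b ^ (k-1)) :
    b ≤ B ↔ b ≤ a := by
  rw [← pow_le_pow_iff_left₀ hb.le hB hk, h, ← mul_pow_sub_one hk,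
    mul_le_mul_iff_left₀ (pow_pos hb _)]

lemma lt_iff_lt_of_pow_eq (hb : 0 < b) (hB : 0 ≤ B) (hk : k ≠ 0) (h : B ^ k = a * b ^ (k-1)) :
    b < B ↔ b < a := by
  rw [← pow_lt_pow_iff_left₀ hb.le hB hk, h, ← mul_pow_sub_one hk,
    mul_lt_mul_iff_left₀ (pow_pos hb _)]

end GeometricMean

lemma avg2_le_of_forall_mem {n k : ℕ} {E : Finset (Finset (Fin n))} (hk : 2 ≤ k)
    (hcard : ∀ e ∈ E, e.card = k) {z : Fin n} (hz : ∀ e ∈ E, z ∈ e) {b : ℝ} (hb : 0 ≤ b)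
    (hle : ∀ j ≠ z, avg2 n k E j ≤ b) : avg2 n k E z ≤ b := by
  rcases (degree_nonneg z : 0 ≤ degree E z).eq_or_lt with hD | hD
  · rw [avg2_eq_div, ← hD, zero_pow (by omega), div_zero]
    exact hb
  have hEz : E.filter (z ∈ ·) = E := filter_true_of_mem hz
  have hdeg_z : degree E z = E.card := by simp [degree, hDeg, hEz]
  have hdeg_le : ∀ j, degree E j ≤ degree E z := fun j => by
    rw [hdeg_z, degree, hDeg]
    exact_mod_cast card_le_card (filter_subset _ _)
  have hsum_deg : ∑ j ∈ univ.erase z, degree E j = (k - 1) * degree E z := by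
    simpa [edgeSum_one] using sum_erase_mul_edgeSum hcard hz (fun _ => (1 : ℝ))
  have hpow : degree E z ^ k = degree E z * degree E z ^ (k-1) :=
    (mul_pow_sub_one (by omega) _).symm
  have hk1 : (0 : ℝ) < k - 1 := by
    have : (2 : ℝ) ≤ k := by exact_mod_cast hk
    linarith
  refine le_of_mul_le_mul_left ?_ (mul_pos hk1 (pow_pos hD k))
  calc (k - 1) * degree E z ^ k * avg2 n k E z
        = (k - 1) * (degree E z * edgeSum E (degree E) z) := by
        rw [edgeSum_degree, hpow]; ring
    _ = ∑ j ∈ univ.erase z, degree E j * edgeSum E (degree E) j :=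
        (sum_erase_mul_edgeSum hcard hz _).symm
    _ ≤ ∑ j ∈ univ.erase z, degree E j * (b * degree E z ^ (k-1)) := by
        refine sum_le_sum fun j hj => mul_le_mul_of_nonneg_left ?_ (degree_nonneg j)
        rw [edgeSum_degree]
        exact mul_le_mul (hle j (ne_of_mem_erase hj))
          (pow_le_pow_left₀ (degree_nonneg j) (hdeg_le j) _) (pow_nonneg (degree_nonneg j) _) hb
    _ = (k - 1) * degree E z ^ k * b := by rw [← sum_mul, hsum_deg, hpow]; ring

section TwoWeights

variable {n k : ℕ} {E : Finset (Finset (Fin n))} {z : Fin n} {b B : ℝ}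

/-- With `c = B / b`, the row sum at `z` is tight because `B c^{k-1} = m_z`, and the others stay
below `B` because `c b = B`. -/
lemma edgeSum_update_le (hk : k ≠ 0) (hb : 0 < b) (hbB : b ≤ B)
    (hBk : B ^ k = avg2 n k E z * b ^ (k-1)) (hle : ∀ i ≠ z, avg2 n k E i ≤ b) (i : Fin n) :
    edgeSum E (update (degree E) z (B / b * degree E z)) i
      ≤ B * update (degree E) z (B / b * degree E z) i ^ (k-1) := by
  rcases eq_or_ne i z with rfl | hi
  · rw [edgeSum_update_self, update_self, edgeSum_degree, mul_pow, ← mul_assoc, div_pow,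
      mul_div_assoc', mul_pow_sub_one hk, hBk, mul_div_cancel_right₀ _ (pow_ne_zero _ hb.ne')]
  rw [update_of_ne hi]
  have hc : 1 ≤ B / b := (one_le_div hb).2 hbB
  calc edgeSum E (update (degree E) z (B / b * degree E z)) i
      ≤ B / b * edgeSum E (degree E) i := edgeSum_update_mul_le degree_nonneg hc i
    _ = B / b * avg2 n k E i * degree E i ^ (k-1) := by rw [edgeSum_degree, mul_assoc]
    _ ≤ B / b * b * degree E i ^ (k-1) :=
        mul_le_mul_of_nonneg_right (mul_le_mul_of_nonneg_left (hle i hi) (zero_le_one.trans hc))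
          (pow_nonneg (degree_nonneg i) _)
    _ = B * degree E i ^ (k-1) := by rw [div_mul_cancel₀ _ hb.ne']

lemma avg2_eq_and_mem_of_norm_eq [Nontrivial (Fin n)] {ρ : ℂ} {x : Fin n → ℂ} (hk : 0 < k)
    (hcard : ∀ e ∈ E, e.card = k) (hconn : HConn n E) (hb : 0 < b) (hbz : b ≤ avg2 n k E z) (hB : 0 ≤ B)
    (hBk : B ^ k = avg2 n k E z * b ^ (k-1)) (hle : ∀ i ≠ z, avg2 n k E i ≤ b)
    (hρ : IsEigenpair (adjT n k E) ρ x) (hnorm : ‖ρ‖ = B) {i : Fin n} (hi : i ≠ z) :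
    avg2 n k E i = b ∧ (b < avg2 n k E z → ∀ e ∈ E, i ∈ e → z ∈ e) := by
  have hbB : b ≤ B := (le_iff_le_of_pow_eq hb hB hk.ne' hBk).2 hbz
  have hc : 1 ≤ B / b := (one_le_div hb).2 hbB
  have hw : ∀ j, 0 < update (degree E) z (B / b * degree E z) j := fun j => by
    rcases eq_or_ne j z with rfl | hj
    · rw [update_self]
      exact mul_pos (zero_lt_one.trans_le hc) (degree_pos hconn j)
    · rw [update_of_ne hj]
      exact degree_pos hconn j
  obtain ⟨hx, heig⟩ := (isEigenpair_adjT_iff hk hcard).1 hρ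
  have htight := edgeSum_eq_of_norm_eq hconn hcard hw
    (edgeSum_update_le hk.ne' hb hbB hBk hle) hx heig hnorm i
  rw [update_of_ne hi] at htight
  have hupper : edgeSum E (update (degree E) z (B / b * degree E z)) i
      ≤ B / b * (avg2 n k E i * degree E i ^ (k-1)) := by
    rw [← edgeSum_degree]
    exact edgeSum_update_mul_le (fun j => degree_nonneg j) hc i
  have hcb : B / b * b = B := div_mul_cancel₀ _ hb.ne'
  have hge : b ≤ avg2 n k E i := by
    have h : B / b * (b * degree E i ^ (k-1)) ≤ B / b * (avg2 n k E i * degree E i ^ (k-1)) := by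
      rw [← mul_assoc, hcb, ← htight]
      exact hupper
    exact le_of_mul_le_mul_right (le_of_mul_le_mul_left h (zero_lt_one.trans_le hc))
      (pow_pos (degree_pos hconn i) _)
  have hmi := le_antisymm (hle i hi) hge
  refine ⟨hmi, fun hlt e he hie => ?_⟩
  have hc1 : 1 < B / b := (one_lt_div hb).2 ((lt_iff_lt_of_pow_eq hb hB hk.ne' hBk).2 hlt)
  refine mem_of_edgeSum_update_mul_eq (degree_pos hconn) hc1 ?_ he hie
  rw [htight, edgeSum_degree, hmi, ← mul_assoc, hcb]

end TwoWeights

section AdjacencySpectrum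

variable {n k : ℕ} {E : Finset (Finset (Fin n))} [Nontrivial (Fin n)]

lemma norm_le_of_avg2_le (hk : 0 < k) (hcard : ∀ e ∈ E, e.card = k) (hconn : HConn n E)
    {a : ℝ} (ha : ∀ i, avg2 n k E i ≤ a) {ρ : ℂ} {x : Fin n → ℂ}
    (hρ : IsEigenpair (adjT n k E) ρ x) : ‖ρ‖ ≤ a := by
  obtain ⟨hx, heig⟩ := (isEigenpair_adjT_iff hk hcard).1 hρ
  refine norm_le_of_edgeSum_le hcard (degree_pos hconn) (fun i => ?_) hx heig
  rw [edgeSum_degree]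
  exact mul_le_mul_of_nonneg_right (ha i) (pow_nonneg (degree_nonneg i) _)

lemma specRad_adjT_eq_of_avg2_eq (hk : 0 < k) (hcard : ∀ e ∈ E, e.card = k)
    (hconn : HConn n E) {m : ℝ} (hm : ∀ i, avg2 n k E i = m) : specRad n k (adjT n k E) = m := by
  have hm0 : 0 < m := hm (Classical.arbitrary _) ▸ avg2_pos hconn _
  have hρ : IsEigenpair (adjT n k E) m (fun j => degree E j) := by
    refine (isEigenpair_adjT_iff hk hcard).2 ⟨fun h => ?_, fun i => ?_⟩
    · have h0 := congrFun h (Classical.arbitrary _)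
      simp only [Pi.zero_apply, Complex.ofReal_eq_zero] at h0
      exact (degree_pos hconn _).ne' h0
    · have h := congrArg ((↑) : ℝ → ℂ) (edgeSum_degree (k := k) (E := E) i)
      simp only [edgeSum, hm] at h ⊢
      push_cast at h
      exact h
  have hnorm : ‖(m : ℂ)‖ = m := by rw [Complex.norm_real, Real.norm_of_nonneg hm0.le]
  refine (specRad_eq_of_isEigenpair hρ fun _ _ hρ' => ?_).trans hnorm
  rw [hnorm]
  exact norm_le_of_avg2_le hk hcard hconn (fun i => (hm i).le) hρ'

end AdjacencySpectrum

/-- Let `G` be a connected `k`-uniform hypergraph on `n` vertices with average 2-degrees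
`m₁ ≥ m₂ ≥ … ≥ m_n`. Then `ρ(G) = m₁^{1/k} m₂^{1-1/k}` if and only if all vertices have the
same average 2-degree; and in that case `ρ(G) = m₁`. -/
theorem stmt4 (n k : ℕ) (hk : 2 ≤ k) (hkn : k ≤ n)
    (E : Finset (Finset (Fin n))) (hcard : ∀ e ∈ E, e.card = k)
    (hconn : HConn n E)
    (hsort : ∀ i j : Fin n, i ≤ j → avg2 n k E j ≤ avg2 n k E i) :
    (specRad n k (adjT n k E) =
        (avg2 n k E ⟨0, by omega⟩) ^ ((1 : ℝ)/k) * (avg2 n k E ⟨1, by omega⟩) ^ (1 - (1 : ℝ)/k)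
      ↔ ∀ i j : Fin n, avg2 n k E i = avg2 n k E j) ∧
    ((∀ i j : Fin n, avg2 n k E i = avg2 n k E j) →
      specRad n k (adjT n k E) = avg2 n k E ⟨0, by omega⟩) := by
  have : Nontrivial (Fin n) := Fin.nontrivial_iff_two_le.2 (by omega)
  set z : Fin n := ⟨0, by omega⟩
  set o : Fin n := ⟨1, by omega⟩
  have ha : 0 < avg2 n k E z := avg2_pos hconn z
  have hb : 0 < avg2 n k E o := avg2_pos hconn o
  have hba : avg2 n k E o ≤ avg2 n k E z := hsort z o (Fin.mk_le_mk.2 (Nat.zero_le _))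
  have hle : ∀ i ≠ z, avg2 n k E i ≤ avg2 n k E o := fun i hi =>
    hsort o i (Fin.le_iff_val_le_val.2 (Nat.one_le_iff_ne_zero.2 fun h => hi (Fin.ext h)))
  have hregular : (∀ i j, avg2 n k E i = avg2 n k E j) → specRad n k (adjT n k E) = avg2 n k E z :=
    fun hreg => specRad_adjT_eq_of_avg2_eq (by omega) hcard hconn fun i => hreg i z
  refine ⟨⟨fun h => ?_, fun hreg => ?_⟩, hregular⟩
  swap
  · rw [hregular hreg, hreg o z, rpow_one_div_mul_rpow_self ha]
  have hB : 0 < avg2 n k E z ^ ((1 : ℝ)/k) * avg2 n k E o ^ (1 - (1 : ℝ)/k) :=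
    mul_pos (Real.rpow_pos_of_pos ha _) (Real.rpow_pos_of_pos hb _)
  obtain ⟨ρ, x, hρ, hnorm⟩ := exists_isEigenpair_norm_eq_specRad
    (fun ρ x => norm_le_of_avg2_le (by omega) hcard hconn fun i =>
      hsort z i (Fin.mk_le_mk.2 (Nat.zero_le _))) (h.trans_ne hB.ne')
  have hkey := fun i (hi : i ≠ z) => avg2_eq_and_mem_of_norm_eq (by omega) hcard hconn hb hba
    hB.le (rpow_one_div_mul_rpow_pow ha.le hb.le (by omega)) hle hρ (hnorm.trans h) hi
  rcases hba.lt_or_eq with hlt | heq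
  · refine absurd (avg2_le_of_forall_mem hk hcard (fun e he => ?_) hb.le hle) hlt.not_ge
    obtain ⟨i, hie, hi⟩ := exists_mem_ne (by rw [hcard e he]; omega) z
    exact (hkey i hi).2 hlt e he hie
  · have hall : ∀ i, avg2 n k E i = avg2 n k E o := fun i =>
      (eq_or_ne i z).elim (fun h => h ▸ heq.symm) fun hi => (hkey i hi).1
    exact fun i j => (hall i).trans (hall j).symm
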